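/- Let f = P/q be a rational function in N_d^{m×m} with P a ℂ^{m×m}-valued polynomial and q a scalar polynomial, P and q coprime. Then for every row vector η ∈ ℂ^m, every real α, and every nonzero real pair (α, β), each nonzero polynomial of the pencil α·(z_{d+1}q₁(z) + q₂(z)) + β·(η(z_{d+1}P₁(z) + P₂(z))η^*) in d+1 variables is real stable, where P₁, P₂, q₁, q₂ are defined by P₁(z) = (P(z) − P(z̄)^*)/(2i), P₂(z) = (P(z) + P(z̄)^*)/2, q₁(z) = (q(z) − conj(q(z̄)))/(2i), q₂(z) = (q(z) + conj(q(z̄)))/2. -/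

import Mathlib

/-!
Put `g := α q + β η P η^*` and `g^♯(z) := conj (g z̄)`; expanding `P₁, P₂, q₁, q₂`, the pencil
member is `(1 - i w)/2 · g(z) + (1 + i w)/2 · g^♯(z)`.

Since `f = P/q` is Nevanlinna, `Im (η P η^* / q) ≥ 0` on `Π^d`. For `β ≠ 0`, a zero of `g` in `Π^d`
is a point where this function takes the real value `-α/β`, i.e. where its imaginary part attains
its minimum; by the open mapping theorem it is then constant, and `g` vanishes identically.
So `g` is either `0` or has no zeros in `Π^d`.

In the latter case `|g^♯(z)| ≤ |g(z)|` on `Π^d`: along the line `λ ↦ Re z + λ Im z`, `g` is a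
one-variable polynomial with all roots `a` in the closed lower half-plane, and
`|λ - conj a| ≤ |λ - a|` for `Im λ ≥ 0`. As `|1 + i w| < |1 - i w|` for `Im w > 0`, the pencil
member cannot vanish.
-/

open MvPolynomial Complex Matrix
open scoped ComplexOrder
open ComplexConjugate

def upperPolyHalfPlane (σ : Type*) : Set (σ → ℂ) := {z | ∀ k, 0 < (z k).im}

section UpperPolyHalfPlane

variable {σ : Type*}

theorem isOpen_upperPolyHalfPlane [Finite σ] : IsOpen (upperPolyHalfPlane σ) := by
  simp only [upperPolyHalfPlane, Set.ofPred_forall]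
  exact isOpen_iInter_of_finite fun k => isOpen_lt continuous_const (by fun_prop)

theorem convex_upperPolyHalfPlane : Convex ℝ (upperPolyHalfPlane σ) := by
  simp only [upperPolyHalfPlane, Set.ofPred_forall]
  exact convex_iInter fun k =>
    (convex_halfSpace_im_gt 0).linear_preimage (LinearMap.proj (R := ℝ) (φ := fun _ => ℂ) k)

theorem upperPolyHalfPlane_nonempty : (upperPolyHalfPlane σ).Nonempty :=
  ⟨fun _ => I, fun _ => by simp⟩

theorem re_add_im_mul_mem_upperPolyHalfPlane {z : σ → ℂ} (hz : z ∈ upperPolyHalfPlane σ)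
    {w : ℂ} (hw : 0 < w.im) :
    (fun k => ((z k).re : ℂ) + (z k).im * w) ∈ upperPolyHalfPlane σ :=
  fun k => by simpa using mul_pos (hz k) hw

end UpperPolyHalfPlane

def MvPolynomial.IsStable {σ : Type*} (p : MvPolynomial σ ℂ) : Prop :=
  ∀ z ∈ upperPolyHalfPlane σ, eval z p ≠ 0

theorem norm_sub_conj_le_norm_sub {w a : ℂ} (hw : 0 ≤ w.im) (ha : a.im ≤ 0) :
    ‖w - conj a‖ ≤ ‖w - a‖ := by
  rw [Complex.norm_def, Complex.norm_def]
  refine Real.sqrt_le_sqrt ?_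
  simp only [Complex.normSq_apply, Complex.sub_re, Complex.sub_im, Complex.conj_re,
    Complex.conj_im]
  nlinarith [mul_nonneg hw (neg_nonneg.2 ha)]

theorem Polynomial.norm_eval_conj_le (r : Polynomial ℂ)
    (hr : ∀ w : ℂ, 0 < w.im → r.eval w ≠ 0) {w : ℂ} (hw : 0 ≤ w.im) :
    ‖r.eval (conj w)‖ ≤ ‖r.eval w‖ := by
  have hroots : ∀ a ∈ r.roots, a.im ≤ 0 := fun a ha =>
    not_lt.1 fun h => hr a h (Polynomial.mem_roots'.1 ha).2
  have hsplit := IsAlgClosed.splits r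
  have norm_prod (s : Multiset ℂ) : ‖s.prod‖ = (s.map norm).prod :=
    map_multiset_prod normHom s
  rw [hsplit.eval_eq_prod_roots, hsplit.eval_eq_prod_roots, norm_mul, norm_mul, norm_prod,
    norm_prod, Multiset.map_map, Multiset.map_map]
  refine mul_le_mul_of_nonneg_left (Multiset.prod_map_le_prod_map₀ _ _
    (fun _ _ => norm_nonneg _) fun a ha => ?_) (norm_nonneg _)
  simpa [← Complex.norm_conj (conj w - a)] using norm_sub_conj_le_norm_sub hw (hroots a ha)

theorem MvPolynomial.eval_map_conj {σ : Type*} (p : MvPolynomial σ ℂ) (z : σ → ℂ) :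
    eval z (map conj p) = conj (eval (conj ∘ z) p) := by
  rw [eval₂_comp, eval_map]
  congr 1
  ext k
  simp

theorem MvPolynomial.IsStable.norm_eval_conj_le {σ : Type*} {p : MvPolynomial σ ℂ}
    (hp : p.IsStable) {z : σ → ℂ} (hz : z ∈ upperPolyHalfPlane σ) :
    ‖eval (conj ∘ z) p‖ ≤ ‖eval z p‖ := by
  set r : Polynomial ℂ := eval₂ Polynomial.C
    (fun k => Polynomial.C ((z k).re : ℂ) + Polynomial.C ((z k).im : ℂ) * Polynomial.X) p
  have hr : ∀ w, r.eval w = eval (fun k => ((z k).re : ℂ) + (z k).im * w) p := by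
    intro w
    have hC : (Polynomial.evalRingHom w).comp Polynomial.C = RingHom.id ℂ :=
      RingHom.ext fun _ => Polynomial.eval_C
    simp [r, polynomial_eval_eval₂, hC]
  have h := r.norm_eval_conj_le
    (fun w hw => hr w ▸ hp _ (re_add_im_mul_mem_upperPolyHalfPlane hz hw)) (w := I) (by simp)
  have hline : (fun k => ((z k).re : ℂ) + (z k).im * I) = z := by
    ext k
    simp
  have hline' : (fun k => ((z k).re : ℂ) + (z k).im * conj I) = conj ∘ z := by
    ext k
    apply Complex.ext <;> simp
  rwa [hr, hr, hline, hline'] at h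

theorem AnalyticOnNhd.eqOn_of_isMinOn_im {E : Type*} [NormedAddCommGroup E] [NormedSpace ℂ E]
    {f : E → ℂ} {U : Set E} {z₀ : E} (hf : AnalyticOnNhd ℂ f U) (hU : IsPreconnected U)
    (hUo : IsOpen U) (hz₀ : z₀ ∈ U) (hmin : IsMinOn (fun z => (f z).im) U z₀) :
    Set.EqOn f (fun _ => f z₀) U := by
  rcases hf.is_constant_or_isOpen hU with ⟨c, hc⟩ | hopen
  · intro z hz
    simp [hc z hz, hc z₀ hz₀]
  · have hnhds : im '' (f '' U) ∈ nhds (f z₀).im :=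
      (isOpenMap_im _ (hopen U le_rfl hUo)).mem_nhds ⟨f z₀, ⟨z₀, hz₀, rfl⟩, rfl⟩
    obtain ⟨_, hlt, _, ⟨z, hz, rfl⟩, rfl⟩ := Filter.Eventually.exists_lt hnhds
    exact absurd (hmin hz) (not_le.2 hlt)

theorem MvPolynomial.eq_zero_of_eqOn_zero {σ : Type*} [Fintype σ]
    {p : MvPolynomial σ ℂ} {U : Set (σ → ℂ)} (hUo : IsOpen U) (hU : U.Nonempty)
    (hp : Set.EqOn (fun z => eval z p) 0 U) : p = 0 := by
  obtain ⟨z₀, hz₀⟩ := hU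
  refine MvPolynomial.funext fun z => ?_
  simpa using (AnalyticOnNhd.eval_mvPolynomial p).eqOn_zero_of_preconnected_of_eventuallyEq_zero
    isPreconnected_univ (Set.mem_univ z₀)
    (Filter.eventuallyEq_of_mem (hUo.mem_nhds hz₀) hp) (Set.mem_univ z)

theorem MvPolynomial.IsStable.isStable_or_eq_zero {σ : Type*} [Fintype σ]
    {p s : MvPolynomial σ ℂ} (hp : p.IsStable)
    (hs : ∀ z ∈ upperPolyHalfPlane σ, 0 ≤ (eval z s / eval z p).im) (α β : ℝ) :
    (C (α : ℂ) * p + C (β : ℂ) * s).IsStable ∨ C (α : ℂ) * p + C (β : ℂ) * s = 0 := by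
  set g := C (α : ℂ) * p + C (β : ℂ) * s
  rcases eq_or_ne β 0 with rfl | hβ
  · rcases eq_or_ne α 0 with rfl | hα
    · exact Or.inr (by simp [g])
    · exact Or.inl fun z hz => by simp [g, hα, hp z hz]
  refine or_iff_not_imp_left.2 fun hg => ?_
  obtain ⟨z₁, hz₁, hgz₁⟩ : ∃ z₁ ∈ upperPolyHalfPlane σ, eval z₁ g = 0 := by
    simpa [IsStable] using hg
  set φ := fun z => eval z s / eval z p
  have hgφ : ∀ z ∈ upperPolyHalfPlane σ, eval z g = eval z p * (α + β * φ z) := by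
    intro z hz
    simp only [g, φ, eval_add, eval_mul, eval_C]
    field_simp [hp z hz]
  have hφz₁ : φ z₁ = ((-(α / β) : ℝ) : ℂ) := by
    have := hgφ z₁ hz₁
    rw [hgz₁, zero_eq_mul] at this
    push_cast
    field_simp
    linear_combination this.resolve_left (hp z₁ hz₁)
  have hφ : AnalyticOnNhd ℂ φ (upperPolyHalfPlane σ) := fun z hz =>
    (AnalyticOnNhd.eval_mvPolynomial s z trivial).div
      (AnalyticOnNhd.eval_mvPolynomial p z trivial) (hp z hz)
  have hφconst := hφ.eqOn_of_isMinOn_im convex_upperPolyHalfPlane.isPreconnected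
    isOpen_upperPolyHalfPlane hz₁ fun z hz => by simpa [hφz₁] using hs z hz
  refine eq_zero_of_eqOn_zero isOpen_upperPolyHalfPlane upperPolyHalfPlane_nonempty
    fun z hz => ?_
  change eval z g = 0
  rw [hgφ z hz, hφconst hz, hφz₁]
  push_cast
  field_simp
  ring

theorem pencil_ne_zero_of_norm_le {a b w : ℂ} (ha : a ≠ 0) (hba : ‖b‖ ≤ ‖a‖)
    (hw : 0 < w.im) :
    (1 - I * w) / 2 * a + (1 + I * w) / 2 * conj b ≠ 0 := by
  have hlt : ‖1 + I * w‖ < ‖1 - I * w‖ := by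
    rw [Complex.norm_def, Complex.norm_def]
    refine Real.sqrt_lt_sqrt (normSq_nonneg _) ?_
    simp only [normSq_apply, add_re, sub_re, add_im, sub_im, mul_re, mul_im, one_re, one_im,
      I_re, I_im]
    nlinarith
  intro h
  have hnorm : ‖1 - I * w‖ * ‖a‖ = ‖1 + I * w‖ * ‖b‖ := by
    rw [← norm_mul, ← Complex.norm_conj b, ← norm_mul,
      show (1 - I * w) * a = -((1 + I * w) * conj b) by linear_combination 2 * h, norm_neg]
  nlinarith [norm_pos_iff.2 ha, mul_le_mul_of_nonneg_left hba (norm_nonneg (1 + I * w))]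

theorem Matrix.dotProduct_conjTranspose_mulVec_star {n α : Type*} [Fintype n] [CommSemiring α]
    [StarRing α] (A : Matrix n n α) (u : n → α) :
    u ⬝ᵥ Aᴴ *ᵥ star u = star (u ⬝ᵥ A *ᵥ star u) := by
  rw [mulVec_conjTranspose, star_star, dotProduct_star, dotProduct_mulVec]

theorem Matrix.im_dotProduct_mulVec_nonneg {n : Type*} [Fintype n] {A : Matrix n n ℂ}
    (hA : ((2 * I)⁻¹ • (A - Aᴴ)).PosSemidef) (u : n → ℂ) :
    0 ≤ (u ⬝ᵥ A *ᵥ star u).im := by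
  have h := hA.dotProduct_mulVec_nonneg (star u)
  rw [star_star, smul_mulVec, sub_mulVec, dotProduct_smul, dotProduct_sub,
    dotProduct_conjTranspose_mulVec_star, Complex.star_def, smul_eq_mul, inv_mul_eq_div,
    ← Complex.im_eq_sub_conj] at h
  exact Complex.zero_le_real.1 h

theorem Matrix.dotProduct_smul_add_smul_conjTranspose_mulVec_star {n : Type*} [Fintype n]
    (a b : ℂ) (A B : Matrix n n ℂ) (u : n → ℂ) :
    u ⬝ᵥ (a • A + b • Bᴴ) *ᵥ star u =
      a * (u ⬝ᵥ A *ᵥ star u) + b * conj (u ⬝ᵥ B *ᵥ star u) := by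
  rw [add_mulVec, smul_mulVec, smul_mulVec, dotProduct_add, dotProduct_smul, dotProduct_smul,
    dotProduct_conjTranspose_mulVec_star, smul_eq_mul, smul_eq_mul, Complex.star_def]

theorem MvPolynomial.eval_dotProduct_mulVec {R σ n : Type*} [CommSemiring R] [Fintype n]
    (P : Matrix n n (MvPolynomial σ R)) (u v : n → R) (z : σ → R) :
    eval z ((C ∘ u) ⬝ᵥ P *ᵥ (C ∘ v)) = u ⬝ᵥ P.map (eval z) *ᵥ v := by
  rw [RingHom.map_dotProduct]
  congr 1
  · ext i
    simp
  · ext i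
    rw [Function.comp_apply, RingHom.map_mulVec]
    congr
    ext j
    simp

theorem MvPolynomial.mul_eval_imPart_add_eval_rePart {σ : Type*} (p p' : MvPolynomial σ ℂ)
    (z : σ → ℂ) (w : ℂ) :
    w * eval z ((2 * I)⁻¹ • (p - map conj p')) +
        eval z ((2 : ℂ)⁻¹ • (p + map conj p')) =
      (1 - I * w) / 2 * eval z p + (1 + I * w) / 2 * conj (eval (conj ∘ z) p') := by
  simp only [smul_eval, eval_sub, eval_add, eval_map_conj, mul_inv, Complex.inv_I]
  ring

theorem Matrix.mul_eval_imPart_add_eval_rePart {n σ : Type*}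
    (P : Matrix n n (MvPolynomial σ ℂ)) (z : σ → ℂ) (w : ℂ) :
    (of fun i j =>
        w * eval z (((2 * I)⁻¹ • (P - of fun i j => MvPolynomial.map conj (P j i))) i j) +
          eval z (((2 : ℂ)⁻¹ • (P + of fun i j => MvPolynomial.map conj (P j i))) i j)) =
      ((1 - I * w) / 2) • P.map (eval z) +
        ((1 + I * w) / 2) • (P.map (eval (conj ∘ z)))ᴴ := by
  ext i j
  exact MvPolynomial.mul_eval_imPart_add_eval_rePart (P i j) (P j i) z w

theorem darlington_stmt9_general (d m : ℕ)
    (P : Matrix (Fin m) (Fin m) (MvPolynomial (Fin d) ℂ))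
    (q : MvPolynomial (Fin d) ℂ)
    (hq : ∀ z : Fin d → ℂ, (∀ k, 0 < (z k).im) → MvPolynomial.eval z q ≠ 0)
    (hpos : ∀ z : Fin d → ℂ, (∀ k, 0 < (z k).im) →
        (((2 * Complex.I)⁻¹ : ℂ) •
          (((MvPolynomial.eval z q)⁻¹ •
              Matrix.of fun i j => MvPolynomial.eval z (P i j)) -
           ((MvPolynomial.eval z q)⁻¹ •
              Matrix.of fun i j => MvPolynomial.eval z (P i j))ᴴ)).PosSemidef) :
    ∀ (P₁ P₂ : Matrix (Fin m) (Fin m) (MvPolynomial (Fin d) ℂ))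
      (q₁ q₂ : MvPolynomial (Fin d) ℂ),
      P₁ = ((2 * Complex.I)⁻¹ : ℂ) •
          (P - Matrix.of fun i j => MvPolynomial.map (starRingEnd ℂ) (P j i)) →
      P₂ = ((2 : ℂ)⁻¹ : ℂ) •
          (P + Matrix.of fun i j => MvPolynomial.map (starRingEnd ℂ) (P j i)) →
      q₁ = ((2 * Complex.I)⁻¹ : ℂ) • (q - MvPolynomial.map (starRingEnd ℂ) q) →
      q₂ = ((2 : ℂ)⁻¹ : ℂ) • (q + MvPolynomial.map (starRingEnd ℂ) q) →
      ∀ (η : Fin m → ℂ) (α β : ℝ), (α, β) ≠ (0, 0) →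
        ∀ F : (Fin d → ℂ) → ℂ → ℂ,
          (∀ z w, F z w =
            (α : ℂ) * (w * MvPolynomial.eval z q₁ + MvPolynomial.eval z q₂) +
            (β : ℂ) * (η ⬝ᵥ (Matrix.of (fun i j =>
                w * MvPolynomial.eval z (P₁ i j) +
                  MvPolynomial.eval z (P₂ i j))).mulVec (star η))) →
          (∃ z w, F z w ≠ 0) →
          ∀ (z : Fin d → ℂ) (w : ℂ), (∀ k, 0 < (z k).im) → 0 < w.im →
            F z w ≠ 0 := by
  rintro P₁ P₂ q₁ q₂ rfl rfl rfl rfl η α β _ F hF ⟨z₀, w₀, hF₀⟩ z w hz hw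
  set s := (C ∘ η) ⬝ᵥ P *ᵥ (C ∘ star η)
  set g := C (α : ℂ) * q + C (β : ℂ) * s
  have hFg : ∀ z w, F z w =
      (1 - I * w) / 2 * eval z g + (1 + I * w) / 2 * conj (eval (conj ∘ z) g) := by
    intro z w
    rw [hF, MvPolynomial.mul_eval_imPart_add_eval_rePart,
      Matrix.mul_eval_imPart_add_eval_rePart, dotProduct_smul_add_smul_conjTranspose_mulVec_star]
    simp only [g, s, map_add, map_mul, eval_C, eval_dotProduct_mulVec, conj_ofReal]
    ring
  have hs : ∀ y ∈ upperPolyHalfPlane (Fin d), 0 ≤ (eval y s / eval y q).im := by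
    intro y hy
    have h : 0 ≤ (η ⬝ᵥ ((eval y q)⁻¹ • P.map (eval y)) *ᵥ star η).im :=
      im_dotProduct_mulVec_nonneg (hpos y hy) η
    rwa [smul_mulVec, dotProduct_smul, smul_eq_mul, ← eval_dotProduct_mulVec, inv_mul_eq_div] at h
  obtain hg | hg : g.IsStable ∨ g = 0 := IsStable.isStable_or_eq_zero hq hs α β
  · rw [hFg]
    exact pencil_ne_zero_of_norm_le (hg z hz) (hg.norm_eval_conj_le hz) hw
  · exact absurd (by simp [hFg, hg]) hF₀

/-- for a rational matrix Nevanlinna function `f = P/q ∈ N_d^{m×m}`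
(`P, q` coprime), for every row vector `η` and every nonzero real pair `(α, β)`,
each nonzero member `α(z_{d+1}q₁ + q₂) + β·η(z_{d+1}P₁ + P₂)η^*` of the pencil
is real stable, i.e. nonvanishing on the upper poly-half-plane `Π^{d+1}`
("nonzero" being expressed as: the function is not identically zero). -/
theorem darlington_stmt9 (d m : ℕ)
    (P : Matrix (Fin m) (Fin m) (MvPolynomial (Fin d) ℂ))
    (q : MvPolynomial (Fin d) ℂ)
    (hcop : ∀ r : MvPolynomial (Fin d) ℂ, (∀ i j, r ∣ P i j) → r ∣ q → IsUnit r)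
    (hq : ∀ z : Fin d → ℂ, (∀ k, 0 < (z k).im) → MvPolynomial.eval z q ≠ 0)
    (hpos : ∀ z : Fin d → ℂ, (∀ k, 0 < (z k).im) →
        (((2 * Complex.I)⁻¹ : ℂ) •
          (((MvPolynomial.eval z q)⁻¹ •
              Matrix.of fun i j => MvPolynomial.eval z (P i j)) -
           ((MvPolynomial.eval z q)⁻¹ •
              Matrix.of fun i j => MvPolynomial.eval z (P i j))ᴴ)).PosSemidef) :
    ∀ (P₁ P₂ : Matrix (Fin m) (Fin m) (MvPolynomial (Fin d) ℂ))
      (q₁ q₂ : MvPolynomial (Fin d) ℂ),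
      P₁ = ((2 * Complex.I)⁻¹ : ℂ) •
          (P - Matrix.of fun i j => MvPolynomial.map (starRingEnd ℂ) (P j i)) →
      P₂ = ((2 : ℂ)⁻¹ : ℂ) •
          (P + Matrix.of fun i j => MvPolynomial.map (starRingEnd ℂ) (P j i)) →
      q₁ = ((2 * Complex.I)⁻¹ : ℂ) • (q - MvPolynomial.map (starRingEnd ℂ) q) →
      q₂ = ((2 : ℂ)⁻¹ : ℂ) • (q + MvPolynomial.map (starRingEnd ℂ) q) →
      ∀ (η : Fin m → ℂ) (α β : ℝ), (α, β) ≠ (0, 0) →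
        ∀ F : (Fin d → ℂ) → ℂ → ℂ,
          (∀ z w, F z w =
            (α : ℂ) * (w * MvPolynomial.eval z q₁ + MvPolynomial.eval z q₂) +
            (β : ℂ) * (η ⬝ᵥ (Matrix.of (fun i j =>
                w * MvPolynomial.eval z (P₁ i j) +
                  MvPolynomial.eval z (P₂ i j))).mulVec (star η))) →
          (∃ z w, F z w ≠ 0) →
          ∀ (z : Fin d → ℂ) (w : ℂ), (∀ k, 0 < (z k).im) → 0 < w.im →
            F z w ≠ 0 :=
  darlington_stmt9_general d m P q hq hpos
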